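/- arXiv:1602.02458 — 7 statements merged into one kernel-verified Lean document; each statement's English description precedes it below -/
import Mathlib

section
/- For every integer m ≥ 3, the smooth map f : ℝ² → ℝ^m defined by f(t,s) = (t+s, t²+2st, t³+3st², 0, …, 0) is, as a germ at the origin, diffeomorphic to the map g(u,w) = (u, w², w³, 0, …, 0); that is, there exist open neighborhoods U of 0 in ℝ² and V of 0 in ℝ^m and C^∞ diffeomorphisms σ from U onto an open neighborhood of 0 in ℝ² with σ(0) = 0, and τ from V onto an open neighborhood of 0 in ℝ^m with τ(0) = 0, such that f(U) ⊆ V and τ ∘ f = g ∘ σ on U. -/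
open Set

noncomputable section

/-- `σ` is a `C^∞` diffeomorphism from the open set `U` onto its open image. -/
def SmoothDiffeoOn {E F : Type*} [NormedAddCommGroup E] [NormedSpace ℝ E]
    [NormedAddCommGroup F] [NormedSpace ℝ F] (σ : E → F) (U : Set E) : Prop :=
  IsOpen U ∧ IsOpen (σ '' U) ∧ ContDiffOn ℝ (⊤ : ℕ∞) σ U ∧
    ∃ σinv : F → E, ContDiffOn ℝ (⊤ : ℕ∞) σinv (σ '' U) ∧ ∀ x ∈ U, σinv (σ x) = x

/-- The map-germ of `f` at `p` is diffeomorphic to the map-germ of `g` at `q`: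
there are open neighborhoods `U ∋ p`, `V ∋ f p` and `C^∞` diffeomorphisms
`σ` from `U` onto an open neighborhood of `q`, `τ` from `V` onto an open
neighborhood of `g q`, with `σ p = q`, `τ (f p) = g q`, `f(U) ⊆ V` and
`τ ∘ f = g ∘ σ` on `U`. -/
def GermDiffeomorphic {E F : Type*} [NormedAddCommGroup E] [NormedSpace ℝ E]
    [NormedAddCommGroup F] [NormedSpace ℝ F]
    (f : E → F) (p : E) (g : E → F) (q : E) : Prop :=
  ∃ (U : Set E) (V : Set F) (σ : E → E) (τ : F → F),
    SmoothDiffeoOn σ U ∧ SmoothDiffeoOn τ V ∧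
    p ∈ U ∧ f p ∈ V ∧ σ p = q ∧ τ (f p) = g q ∧
    (∀ x ∈ U, f x ∈ V) ∧ ∀ x ∈ U, τ (f x) = g (σ x)

/-- For every `m ≥ 3`, the map
`f(t,s) = (t+s, t²+2st, t³+3st², 0, …, 0) : ℝ² → ℝ^m` is, as a germ at the origin,
diffeomorphic to `g(u,w) = (u, w², w³, 0, …, 0)`. -/
theorem cuspidal_edge_normal_form (m : ℕ) (hm : 3 ≤ m) :
    GermDiffeomorphic
      (fun p : ℝ × ℝ => fun j : Fin m =>
        if j.val = 0 then p.1 + p.2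
        else if j.val = 1 then p.1 ^ 2 + 2 * p.2 * p.1
        else if j.val = 2 then p.1 ^ 3 + 3 * p.2 * p.1 ^ 2
        else 0)
      ((0 : ℝ), (0 : ℝ))
      (fun p : ℝ × ℝ => fun j : Fin m =>
        if j.val = 0 then p.1
        else if j.val = 1 then p.2 ^ 2
        else if j.val = 2 then p.2 ^ 3
        else 0)
      ((0 : ℝ), (0 : ℝ)) := by
  have h0 : 0 < m := by omega
  have h1 : 1 < m := by omega
  have h2 : 2 < m := by omega
  set σ : ℝ × ℝ → ℝ × ℝ := fun p => (p.1 + p.2, -p.2) with hσ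
  set τ : (Fin m → ℝ) → (Fin m → ℝ) := fun y j =>
    if j.val = 0 then y ⟨0, h0⟩
    else if j.val = 1 then (y ⟨0, h0⟩) ^ 2 - y ⟨1, h1⟩
    else if j.val = 2 then
      -(y ⟨2, h2⟩ + 2 * (y ⟨0, h0⟩) ^ 3 - 3 * (y ⟨0, h0⟩) * (y ⟨1, h1⟩)) / 2
    else y j with hτ
  set τinv : (Fin m → ℝ) → (Fin m → ℝ) := fun z j =>
    if j.val = 0 then z ⟨0, h0⟩
    else if j.val = 1 then (z ⟨0, h0⟩) ^ 2 - z ⟨1, h1⟩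
    else if j.val = 2 then
      -2 * z ⟨2, h2⟩ + (z ⟨0, h0⟩) ^ 3 - 3 * (z ⟨0, h0⟩) * (z ⟨1, h1⟩)
    else z j with hτinv
  have σinvol : ∀ p, σ (σ p) = p := by intro p; simp [hσ]
  have τleft : ∀ y, τinv (τ y) = y := by
    intro y; funext j
    by_cases ha : j.val = 0
    · have hj : j = ⟨0, h0⟩ := Fin.ext ha
      subst hj; simp [hτ, hτinv]
    · by_cases hb : j.val = 1
      · have hj : j = ⟨1, h1⟩ := Fin.ext hb
        subst hj; simp [hτ, hτinv]
      · by_cases hc : j.val = 2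
        · have hj : j = ⟨2, h2⟩ := Fin.ext hc
          subst hj; simp only [hτ, hτinv]; norm_num; ring
        · simp [hτ, hτinv, ha, hb, hc]
  have τright : ∀ z, τ (τinv z) = z := by
    intro z; funext j
    by_cases ha : j.val = 0
    · have hj : j = ⟨0, h0⟩ := Fin.ext ha
      subst hj; simp [hτ, hτinv]
    · by_cases hb : j.val = 1
      · have hj : j = ⟨1, h1⟩ := Fin.ext hb
        subst hj; simp [hτ, hτinv]
      · by_cases hc : j.val = 2
        · have hj : j = ⟨2, h2⟩ := Fin.ext hc
          subst hj; simp only [hτ, hτinv]; norm_num; ring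
        · simp [hτ, hτinv, ha, hb, hc]
  have himg : ∀ {α : Type} (h : α → α), (∀ a, ∃ b, h b = a) → h '' univ = univ := by
    intro α h hs
    ext a; simp only [image_univ, mem_range, mem_univ, iff_true]
    exact hs a
  have hσimg : σ '' univ = univ := himg σ fun a => ⟨σ a, σinvol a⟩
  have hτimg : τ '' univ = univ := himg τ fun a => ⟨τinv a, τright a⟩
  have hev : ∀ i : Fin m, ContDiff ℝ (⊤ : ℕ∞) (fun x : Fin m → ℝ => x i) :=
    fun i => (ContinuousLinearMap.proj (R := ℝ) (φ := fun _ : Fin m => ℝ) i).contDiff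
  have smoothτ : ContDiff ℝ (⊤ : ℕ∞) τ := by
    rw [contDiff_pi]
    intro j
    simp only [hτ]
    split_ifs
    · exact hev _
    · exact ((hev _).pow 2).sub (hev _)
    · exact (((hev _).add (contDiff_const.mul ((hev _).pow 3))).sub
        ((contDiff_const.mul (hev _)).mul (hev _))).neg.div_const 2
    · exact hev _
  have smoothτinv : ContDiff ℝ (⊤ : ℕ∞) τinv := by
    rw [contDiff_pi]
    intro j
    simp only [hτinv]
    split_ifs
    · exact hev _
    · exact ((hev _).pow 2).sub (hev _)
    · exact ((contDiff_const.mul (hev _)).add ((hev _).pow 3)).sub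
        ((contDiff_const.mul (hev _)).mul (hev _))
    · exact hev _
  have smoothσ : ContDiff ℝ (⊤ : ℕ∞) σ := by fun_prop
  have heq : ∀ x : ℝ × ℝ,
      τ (fun j : Fin m =>
        if j.val = 0 then x.1 + x.2
        else if j.val = 1 then x.1 ^ 2 + 2 * x.2 * x.1
        else if j.val = 2 then x.1 ^ 3 + 3 * x.2 * x.1 ^ 2
        else 0)
      = fun j : Fin m =>
        if j.val = 0 then (σ x).1
        else if j.val = 1 then (σ x).2 ^ 2
        else if j.val = 2 then (σ x).2 ^ 3
        else 0 := by
    intro x; funext j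
    by_cases ha : j.val = 0
    · have hj : j = ⟨0, h0⟩ := Fin.ext ha
      subst hj; simp [hτ, hσ]
    · by_cases hb : j.val = 1
      · have hj : j = ⟨1, h1⟩ := Fin.ext hb
        subst hj; simp only [hτ, hσ]; norm_num; ring
      · by_cases hc : j.val = 2
        · have hj : j = ⟨2, h2⟩ := Fin.ext hc
          subst hj; simp only [hτ, hσ]; norm_num; ring
        · simp [hτ, ha, hb, hc]
  have hσ0 : σ ((0 : ℝ), (0 : ℝ)) = ((0 : ℝ), (0 : ℝ)) := by simp [hσ]
  refine ⟨univ, univ, σ, τ,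
    ⟨isOpen_univ, by rw [hσimg]; exact isOpen_univ, smoothσ.contDiffOn,
      σ, by rw [hσimg]; exact smoothσ.contDiffOn, fun x _ => σinvol x⟩,
    ⟨isOpen_univ, by rw [hτimg]; exact isOpen_univ, smoothτ.contDiffOn,
      τinv, by rw [hτimg]; exact smoothτinv.contDiffOn, fun x _ => τleft x⟩,
    mem_univ _, mem_univ _, hσ0, ?_, fun x _ => mem_univ _, fun x _ => by rw [heq x]⟩
  have := heq ((0 : ℝ), (0 : ℝ))
  rw [hσ0] at this
  exact this
end
end

section
/- The smooth map f : ℝ² → ℝ³ defined by f(t,s) = (t+s, t²+2st, t⁴+4st³) (the folded umbrella) is, as a germ at the origin, diffeomorphic to the cuspidal cross cap g(u,w) = (u, w², uw³); that is, there exist open neighborhoods U of 0 in ℝ² and V of 0 in ℝ³ and C^∞ diffeomorphisms σ from U onto an open neighborhood of 0 in ℝ² with σ(0) = 0, and τ from V onto an open neighborhood of 0 in ℝ³ with τ(0) = 0, such that f(U) ⊆ V and τ ∘ f = g ∘ σ on U. -/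
open Set

noncomputable section

/-- The folded umbrella `f(t,s) = (t+s, t²+2st, t⁴+4st³) : ℝ² → ℝ³` is,
as a germ at the origin, diffeomorphic to the cuspidal cross cap `g(u,w) = (u, w², uw³)`. -/
theorem folded_umbrella_normal_form :
    GermDiffeomorphic
      (fun p : ℝ × ℝ =>
        ![p.1 + p.2, p.1 ^ 2 + 2 * p.2 * p.1, p.1 ^ 4 + 4 * p.2 * p.1 ^ 3])
      ((0 : ℝ), (0 : ℝ))
      (fun p : ℝ × ℝ => ![p.1, p.2 ^ 2, p.1 * p.2 ^ 3])
      ((0 : ℝ), (0 : ℝ)) := by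
  refine ⟨univ, univ,
    (fun p : ℝ × ℝ => (8 * (p.1 + p.2), p.2)),
    (fun v : Fin 3 → ℝ => ![8 * v 0, (v 0) ^ 2 - v 1,
      v 2 + 8 * (v 0) ^ 4 - 12 * (v 0) ^ 2 * v 1 + 3 * (v 1) ^ 2]),
    ?_, ?_, trivial, trivial, ?_, ?_, fun x _ => trivial, ?_⟩
  · -- σ is a diffeo
    have hsurj : (fun p : ℝ × ℝ => (8 * (p.1 + p.2), p.2)) '' univ = univ := by
      apply Set.image_univ_of_surjective
      intro ⟨a, b⟩
      exact ⟨(a / 8 - b, b), by simp; ring⟩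
    refine ⟨isOpen_univ, (by rw [hsurj]; exact isOpen_univ), ?_, fun q => (1/8 * q.1 - q.2, q.2), ?_, ?_⟩
    · exact ContDiff.contDiffOn (by fun_prop)
    · exact ContDiff.contDiffOn (by fun_prop)
    · intro x _; simp
  · -- τ is a diffeo
    have hsurj : (fun v : Fin 3 → ℝ => ![8 * v 0, (v 0) ^ 2 - v 1,
        v 2 + 8 * (v 0) ^ 4 - 12 * (v 0) ^ 2 * v 1 + 3 * (v 1) ^ 2]) '' univ = univ := by
      apply Set.image_univ_of_surjective
      intro w
      refine ⟨![1/8 * w 0, (1/8 * w 0) ^ 2 - w 1,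
        w 2 - 8 * (1/8 * w 0) ^ 4 + 12 * (1/8 * w 0) ^ 2 * ((1/8 * w 0) ^ 2 - w 1)
          - 3 * ((1/8 * w 0) ^ 2 - w 1) ^ 2], ?_⟩
      funext i
      fin_cases i <;> simp <;> ring
    have hcd : ContDiff ℝ (⊤ : ℕ∞) (fun v : Fin 3 → ℝ => ![8 * v 0, (v 0) ^ 2 - v 1,
        v 2 + 8 * (v 0) ^ 4 - 12 * (v 0) ^ 2 * v 1 + 3 * (v 1) ^ 2]) := by
      apply contDiff_pi.2
      intro i
      fin_cases i <;> simp <;> fun_prop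
    have hcdinv : ContDiff ℝ (⊤ : ℕ∞) (fun w : Fin 3 → ℝ => ![1/8 * w 0, (1/8 * w 0) ^ 2 - w 1,
        w 2 - 8 * (1/8 * w 0) ^ 4 + 12 * (1/8 * w 0) ^ 2 * ((1/8 * w 0) ^ 2 - w 1)
          - 3 * ((1/8 * w 0) ^ 2 - w 1) ^ 2]) := by
      apply contDiff_pi.2
      intro i
      fin_cases i <;> simp <;> fun_prop
    refine ⟨isOpen_univ, (by rw [hsurj]; exact isOpen_univ), hcd.contDiffOn,
      (fun w : Fin 3 → ℝ => ![1/8 * w 0, (1/8 * w 0) ^ 2 - w 1,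
        w 2 - 8 * (1/8 * w 0) ^ 4 + 12 * (1/8 * w 0) ^ 2 * ((1/8 * w 0) ^ 2 - w 1)
          - 3 * ((1/8 * w 0) ^ 2 - w 1) ^ 2]), hcdinv.contDiffOn, ?_⟩
    intro v _
    funext i
    fin_cases i <;> simp <;> ring
  · simp
  · funext i; fin_cases i <;> simp
  · intro x _
    funext i
    fin_cases i <;> simp <;> ring
end
end

section
/- Let Ω ⊆ ℝ^m be open with C^∞ Christoffel symbols Γ^λ_{μν} : Ω → ℝ, let φ : W → Ω be a geodesic flow, let γ : I → Ω be a C^∞ curve, and let f(t,s) = φ(γ(t), γ'(t), s) be the ∇-tangent surface, defined on an open neighborhood V of I × {0} in I × ℝ. Then: (i) there exists a C^∞ map F : V → ℝ^m with s · F(t,s) = ∂f/∂t(t,s) − ∂f/∂s(t,s) on V and F(t,0) = (∇²γ)(t) for all t ∈ I; (ii) if moreover (∇γ)(t₀) and (∇²γ)(t₀) are linearly independent, then there is an open neighborhood of (t₀,0) on which the differential of f at (t,s) has rank 2 if s ≠ 0 and rank 1 if s = 0 (so the singular locus of f near (t₀,0) is exactly {s = 0}). -/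
/-!
Since `φ(x, v, 0) = x` and `∂ₛφ(x, v, 0) = v`, both `∂ₜf` and `∂ₛf` equal `γ'` along `s = 0`, so
`g = ∂ₜf - ∂ₛf` vanishes there and Hadamard's lemma writes `g = s • F` with
`F(t, s) = ∫₀¹ ∂ₛg(t, σ s) dσ` smooth and `F(t, 0) = ∂ₛg(t, 0)`. Exchanging the mixed partials,
`∂ₛg(t, 0) = γ''(t) - ∂ₛ²φ(γ t, γ' t, 0)`, and the geodesic equation turns the last term into
`-Γ(γ)(γ', γ')`, so `F(t, 0) = ∇²γ(t)`. The differential of `f` has columns `∂ₛf + s F` and `∂ₛf`: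
they are independent for `s ≠ 0` and coincide for `s = 0` wherever `∂ₛf` and `F` are independent,
an open condition that holds at `(t₀, 0)`.
-/

open Set

noncomputable section

/-- Iterated covariant derivative of a curve `γ` with respect to the Christoffel
symbols `Γ` (in local coordinates): `covDeriv Γ γ k` is `∇^{k+1} γ`, i.e.
`covDeriv Γ γ 0 = ∇γ = γ'` and
`(∇^{k+1}γ)^λ(t) = d/dt (∇^k γ)^λ(t) + Σ_{μ,ν} Γ^λ_{μν}(γ(t)) (γ^μ)'(t) (∇^k γ)^ν(t)`. -/
noncomputable def covDeriv {m : ℕ} (Γ : (Fin m → ℝ) → Fin m → Fin m → Fin m → ℝ)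
    (γ : ℝ → Fin m → ℝ) : ℕ → ℝ → Fin m → ℝ
  | 0 => deriv γ
  | k + 1 => fun t l =>
      deriv (fun u => covDeriv Γ γ k u l) t +
        ∑ μ, ∑ ν, Γ (γ t) l μ ν * deriv γ t μ * covDeriv Γ γ k t ν

/-- `φ : W → Ω` is a geodesic flow for the Christoffel symbols `Γ` on the open set
`Ω ⊆ ℝ^m`: `W ⊆ Ω × ℝ^m × ℝ` is an open neighborhood of `Ω × ℝ^m × {0}`, `φ` is `C^∞`
on `W`, and for each `(x, v)` the curve `s ↦ φ(x, v, s)` is a geodesic with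
`φ(x,v,0) = x` and `∂φ/∂s(x,v,0) = v`. -/
structure IsGeodesicFlow {m : ℕ} (Γ : (Fin m → ℝ) → Fin m → Fin m → Fin m → ℝ)
    (Ω : Set (Fin m → ℝ)) (W : Set ((Fin m → ℝ) × (Fin m → ℝ) × ℝ))
    (φ : (Fin m → ℝ) × (Fin m → ℝ) × ℝ → Fin m → ℝ) : Prop where
  isOpen_W : IsOpen W
  subset_fst : ∀ p ∈ W, p.1 ∈ Ω
  mem_zero : ∀ x ∈ Ω, ∀ v, (x, v, (0 : ℝ)) ∈ W
  smooth : ContDiffOn ℝ (⊤ : ℕ∞) φ W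
  mapsTo : ∀ p ∈ W, φ p ∈ Ω
  init_pos : ∀ x ∈ Ω, ∀ v, φ (x, v, 0) = x
  init_vel : ∀ x ∈ Ω, ∀ v, deriv (fun s => φ (x, v, s)) 0 = v
  geodesic : ∀ p ∈ W, ∀ l,
    deriv (deriv (fun s => φ (p.1, p.2.1, s) l)) p.2.2 +
      ∑ μ, ∑ ν, Γ (φ p) l μ ν * deriv (fun s => φ (p.1, p.2.1, s) μ) p.2.2 *
        deriv (fun s => φ (p.1, p.2.1, s) ν) p.2.2 = 0

open Filter Topology
open scoped ContDiff

theorem isOpen_setOf_forall_mem_prod {α β : Type*} [TopologicalSpace α] [TopologicalSpace β]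
    {K : Set β} (hK : IsCompact K) {Y : Set (α × β)} (hY : IsOpen Y) :
    IsOpen {x | ∀ y ∈ K, (x, y) ∈ Y} :=
  isOpen_iff_mem_nhds.2 fun _ hx =>
    hK.eventually_forall_of_forall_eventually fun y hy => hY.mem_nhds (hx y hy)

universe u

section ParametricIntegral

variable {X E : Type u} [NormedAddCommGroup X] [NormedSpace ℝ X]
  [NormedAddCommGroup E] [NormedSpace ℝ E]

theorem hasFDerivAt_intervalIntegral_of_contDiffOn {Y : Set (X × ℝ)} (hY : IsOpen Y)
    {h : X × ℝ → E} (hh : ContDiffOn ℝ 1 h Y) {x₀ : X}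
    (hx₀ : ∀ σ ∈ Icc (0 : ℝ) 1, (x₀, σ) ∈ Y) :
    HasFDerivAt (fun x => ∫ σ in (0 : ℝ)..1, h (x, σ))
      (∫ σ in (0 : ℝ)..1, (fderiv ℝ h (x₀, σ)).comp (ContinuousLinearMap.inl ℝ X ℝ)) x₀ := by
  have hh' : ContinuousOn (fderiv ℝ h) Y := hh.continuousOn_fderiv_of_isOpen hY le_rfl
  have hslice : ∀ x : X, Continuous fun σ : ℝ => (x, σ) := fun x => by fun_prop
  obtain ⟨C, hC⟩ : ∃ C, ∀ σ ∈ Icc (0 : ℝ) 1, ‖fderiv ℝ h (x₀, σ)‖ ≤ C :=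
    isCompact_Icc.exists_bound_of_continuousOn (hh'.comp (hslice x₀).continuousOn hx₀)
  have hnhds : ∀ᶠ x in 𝓝 x₀, ∀ σ ∈ Icc (0 : ℝ) 1,
      (x, σ) ∈ Y ∧ ‖fderiv ℝ h (x, σ)‖ < C + 1 := by
    refine isCompact_Icc.eventually_forall_of_forall_eventually fun σ hσ => ?_
    have hmem := hY.mem_nhds (hx₀ σ hσ)
    have hlt : ∀ᶠ q in 𝓝 (x₀, σ), ‖fderiv ℝ h q‖ < C + 1 :=
      ((hh'.continuousAt hmem).norm).eventually (gt_mem_nhds (by linarith [hC σ hσ]))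
    filter_upwards [hmem, hlt] with q hq hq' using ⟨hq, hq'⟩
  have hIoc : uIoc (0 : ℝ) 1 ⊆ Icc 0 1 := by
    rw [uIoc_of_le zero_le_one]; exact Ioc_subset_Icc_self
  have hcont : ∀ x, (∀ σ ∈ Icc (0 : ℝ) 1, (x, σ) ∈ Y) →
      ContinuousOn (fun σ => h (x, σ)) (Icc 0 1) := fun x hx =>
    hh.continuousOn.comp (hslice x).continuousOn hx
  refine intervalIntegral.hasFDerivAt_integral_of_dominated_of_fderiv_le
    (F := fun x σ => h (x, σ))
    (F' := fun x σ => (fderiv ℝ h (x, σ)).comp (ContinuousLinearMap.inl ℝ X ℝ))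
    (bound := fun _ => C + 1) hnhds ?_ ?_ ?_ ?_ intervalIntegrable_const ?_
  · filter_upwards [hnhds] with x hx
    exact ((hcont x fun σ hσ => (hx σ hσ).1).mono hIoc).aestronglyMeasurable measurableSet_uIoc
  · exact (hcont x₀ hx₀).intervalIntegrable_of_Icc zero_le_one
  · refine (ContinuousOn.mono ?_ hIoc).aestronglyMeasurable measurableSet_uIoc
    exact (hh'.comp (hslice x₀).continuousOn hx₀).clm_comp continuousOn_const
  · refine MeasureTheory.ae_of_all _ fun σ hσ x hx => ?_
    calc ‖(fderiv ℝ h (x, σ)).comp (ContinuousLinearMap.inl ℝ X ℝ)‖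
        ≤ ‖fderiv ℝ h (x, σ)‖ * ‖ContinuousLinearMap.inl ℝ X ℝ‖ :=
          ContinuousLinearMap.opNorm_comp_le _ _
      _ ≤ ‖fderiv ℝ h (x, σ)‖ := by
          apply mul_le_of_le_one_right (norm_nonneg _)
          exact ContinuousLinearMap.opNorm_le_bound _ zero_le_one fun z => by simp
      _ ≤ C + 1 := ((hx σ (hIoc hσ)).2).le
  · refine MeasureTheory.ae_of_all _ fun σ hσ x hx => ?_
    have hxσ := (hx σ (hIoc hσ)).1
    exact ((hh.differentiableOn one_ne_zero _ hxσ).differentiableAt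
      (hY.mem_nhds hxσ)).hasFDerivAt.comp x (hasFDerivAt_prodMk_left x σ)

theorem contDiffOn_intervalIntegral_of_contDiffOn {Y : Set (X × ℝ)} (hY : IsOpen Y)
    {h : X × ℝ → E} (hh : ContDiffOn ℝ ∞ h Y) :
    ContDiffOn ℝ ∞ (fun x => ∫ σ in (0 : ℝ)..1, h (x, σ))
      {x | ∀ σ ∈ Icc (0 : ℝ) 1, (x, σ) ∈ Y} := by
  have hU : IsOpen {x | ∀ σ ∈ Icc (0 : ℝ) 1, (x, σ) ∈ Y} :=
    isOpen_setOf_forall_mem_prod isCompact_Icc hY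
  suffices ∀ n : ℕ, ∀ {E : Type u} [NormedAddCommGroup E] [NormedSpace ℝ E] (h : X × ℝ → E),
      ContDiffOn ℝ ∞ h Y →
        ContDiffOn ℝ n (fun x => ∫ σ in (0 : ℝ)..1, h (x, σ)) {x | ∀ σ ∈ Icc (0 : ℝ) 1, (x, σ) ∈ Y}
    from contDiffOn_infty.2 fun n => this n h hh
  intro n
  induction n with
  | zero =>
    intro E _ _ h hh
    exact contDiffOn_zero.2 fun x hx =>
      (hasFDerivAt_intervalIntegral_of_contDiffOn hY (hh.of_le (by simp)) hx).continuousAt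
        |>.continuousWithinAt
  | succ n ih =>
    intro E _ _ h hh
    have hderiv := fun x (hx : x ∈ {x | ∀ σ ∈ Icc (0 : ℝ) 1, (x, σ) ∈ Y}) =>
      hasFDerivAt_intervalIntegral_of_contDiffOn hY (hh.of_le (by simp)) hx
    rw [Nat.cast_succ, contDiffOn_succ_iff_fderiv_of_isOpen hU]
    refine ⟨fun x hx => (hderiv x hx).differentiableAt.differentiableWithinAt, by simp, ?_⟩
    refine (ih (fun q => (fderiv ℝ h q).comp (ContinuousLinearMap.inl ℝ X ℝ)) ?_).congr
      fun x hx => (hderiv x hx).fderiv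
    exact (hh.fderiv_of_isOpen hY le_rfl).clm_comp contDiffOn_const

theorem sub_eq_smul_integral_fderiv [CompleteSpace E] {V : Set (X × ℝ)} (hV : IsOpen V)
    {g : X × ℝ → E} (hg : ContDiffOn ℝ 1 g V) {p : X × ℝ}
    (hp : ∀ σ ∈ Icc (0 : ℝ) 1, (p.1, σ * p.2) ∈ V) :
    g p - g (p.1, 0) = p.2 • ∫ σ in (0 : ℝ)..1, fderiv ℝ g (p.1, σ * p.2) (0, 1) := by
  have hpath : Continuous fun σ : ℝ => (p.1, σ * p.2) := by fun_prop
  have hderiv : ∀ σ ∈ uIcc (0 : ℝ) 1, HasDerivAt (fun σ => g (p.1, σ * p.2))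
      (p.2 • fderiv ℝ g (p.1, σ * p.2) (0, 1)) σ := by
    intro σ hσ
    rw [uIcc_of_le zero_le_one] at hσ
    have hpath' : HasDerivAt (fun σ : ℝ => (p.1, σ * p.2)) (p.2 • ((0 : X), (1 : ℝ))) σ := by
      simpa using (hasDerivAt_const σ p.1).prodMk ((hasDerivAt_id σ).mul_const p.2)
    have hgσ := ((hg.differentiableOn one_ne_zero _ (hp σ hσ)).differentiableAt
      (hV.mem_nhds (hp σ hσ))).hasFDerivAt
    rw [← map_smul]
    exact hgσ.comp_hasDerivAt σ hpath'
  have hcont : ContinuousOn (fun σ : ℝ => fderiv ℝ g (p.1, σ * p.2) (0, 1)) (uIcc 0 1) := by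
    rw [uIcc_of_le zero_le_one]
    exact ((hg.continuousOn_fderiv_of_isOpen hV le_rfl).comp hpath.continuousOn hp).clm_apply
      continuousOn_const
  rw [← intervalIntegral.integral_smul, intervalIntegral.integral_eq_sub_of_hasDerivAt hderiv
    ((hcont.const_smul p.2).intervalIntegrable)]
  simp

/-- Hadamard's lemma in one variable, with parameters. -/
theorem exists_contDiffOn_smul_eq_of_eq_zero [CompleteSpace E] {V : Set (X × ℝ)} (hV : IsOpen V)
    {g : X × ℝ → E} (hg : ContDiffOn ℝ ∞ g V) (hg0 : ∀ p ∈ V, p.2 = 0 → g p = 0) :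
    ∃ F : X × ℝ → E, ContDiffOn ℝ ∞ F V ∧ (∀ p ∈ V, p.2 • F p = g p) ∧
      ∀ p ∈ V, p.2 = 0 → F p = fderiv ℝ g p (0, 1) := by
  classical
  set F : X × ℝ → E := fun p => if p.2 = 0 then fderiv ℝ g p (0, 1) else p.2⁻¹ • g p
  have hsmul : ∀ p ∈ V, p.2 • F p = g p := fun p hp => by
    by_cases hp0 : p.2 = 0
    · simp [hp0, hg0 p hp hp0]
    · simp [F, hp0, smul_smul]
  refine ⟨F, fun p hp => ?_, hsmul, fun p _ hp0 => if_pos hp0⟩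
  by_cases hp0 : p.2 = 0
  · -- near the zero section `F` is the parametric integral `∫₀¹ ∂ₛg (x, σ s) dσ`
    set Y : Set ((X × ℝ) × ℝ) := {q | (q.1.1, q.2 * q.1.2) ∈ V}
    have hY : IsOpen Y := hV.preimage (by fun_prop)
    set U := {x | ∀ σ ∈ Icc (0 : ℝ) 1, (x, σ) ∈ Y}
    have hU : IsOpen U := isOpen_setOf_forall_mem_prod isCompact_Icc hY
    have hpU : p ∈ U := fun σ _ => show (p.1, σ * p.2) ∈ V by rwa [hp0, mul_zero, ← hp0]
    have hh : ContDiffOn ℝ ∞ (fun q : (X × ℝ) × ℝ => fderiv ℝ g (q.1.1, q.2 * q.1.2) (0, 1)) Y :=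
      ((hg.fderiv_of_isOpen hV le_rfl).comp
        (by fun_prop : ContDiff ℝ ∞ fun q : (X × ℝ) × ℝ => (q.1.1, q.2 * q.1.2)).contDiffOn
        fun _ hq => hq).clm_apply contDiffOn_const
    have hFU : ∀ x ∈ U, F x = ∫ σ in (0 : ℝ)..1, fderiv ℝ g (x.1, σ * x.2) (0, 1) := by
      intro x hx
      by_cases hx0 : x.2 = 0
      · obtain ⟨x₁, rfl⟩ : ∃ x₁, x = (x₁, 0) := ⟨x.1, Prod.ext rfl hx0⟩
        simp [F]
      · have hxV : ∀ σ ∈ Icc (0 : ℝ) 1, (x.1, σ * x.2) ∈ V := hx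
        have hx₀ : g (x.1, 0) = 0 := hg0 _ (by simpa using hxV 0 (by simp)) rfl
        have := sub_eq_smul_integral_fderiv hV (hg.of_le (by simp)) hxV
        rw [hx₀, sub_zero] at this
        simp [F, hx0, this, smul_smul]
    exact ((contDiffOn_intervalIntegral_of_contDiffOn hY hh).congr hFU).contDiffAt
      (hU.mem_nhds hpU) |>.contDiffWithinAt
  · have hO : IsOpen (V ∩ {q | q.2 ≠ 0}) := hV.inter (isOpen_ne_fun continuous_snd continuous_const)
    have hFO : ContDiffOn ℝ ∞ (fun q : X × ℝ => q.2⁻¹ • g q) (V ∩ {q | q.2 ≠ 0}) :=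
      (contDiffOn_snd.inv fun _ hq => hq.2).smul (hg.mono inter_subset_left)
    exact (hFO.congr fun q hq => if_neg hq.2).contDiffAt (hO.mem_nhds ⟨hp, hp0⟩)
      |>.contDiffWithinAt

end ParametricIntegral

section Rank

variable {K M : Type*} [Field K] [AddCommGroup M] [Module K M]

theorem LinearMap.range_eq_span_pair (L : K × K →ₗ[K] M) :
    L.range = Submodule.span K {L (1, 0), L (0, 1)} := by
  have hL : ∀ x : K × K, x.1 • L (1, 0) + x.2 • L (0, 1) = L x := fun x => by
    rw [← map_smul, ← map_smul, ← map_add]; congr 1; ext <;> simp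
  ext y
  simp only [LinearMap.mem_range, Submodule.mem_span_pair]
  exact ⟨fun ⟨x, hx⟩ => ⟨x.1, x.2, (hL x).trans hx⟩,
    fun ⟨a, b, hy⟩ => ⟨(a, b), (hL _).symm.trans hy⟩⟩

theorem LinearMap.rank_eq_two_of_linearIndependent (L : K × K →ₗ[K] M)
    (hL : LinearIndependent K ![L (1, 0), L (0, 1)]) : L.rank = 2 := by
  rw [LinearMap.rank, L.range_eq_span_pair, ← Matrix.range_cons_cons_empty _ _ ![], rank_span hL]
  simpa using Cardinal.mk_range_eq_of_injective hL.injective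

theorem LinearMap.rank_eq_one_of_apply_eq (L : K × K →ₗ[K] M) (hL : L (1, 0) = L (0, 1))
    (hL0 : L (0, 1) ≠ 0) : L.rank = 1 := by
  rw [LinearMap.rank, L.range_eq_span_pair, hL, Set.pair_eq_singleton, ← Module.finrank_eq_rank,
    finrank_span_singleton hL0, Nat.cast_one]

end Rank

theorem exists_isOpen_rank_fderiv_eq {E : Type*} [NormedAddCommGroup E] [NormedSpace ℝ E]
    [FiniteDimensional ℝ E] {V : Set (ℝ × ℝ)} (hV : IsOpen V) {f F : ℝ × ℝ → E}
    (hf : ContDiffOn ℝ 1 f V) (hF : ContinuousOn F V)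
    (hfF : ∀ p ∈ V, fderiv ℝ f p (1, 0) = fderiv ℝ f p (0, 1) + p.2 • F p)
    {p₀ : ℝ × ℝ} (hp₀ : p₀ ∈ V) (hli : LinearIndependent ℝ ![fderiv ℝ f p₀ (0, 1), F p₀]) :
    ∃ U : Set (ℝ × ℝ), IsOpen U ∧ p₀ ∈ U ∧ U ⊆ V ∧ ∀ p ∈ U,
      (p.2 ≠ 0 → LinearMap.rank ((fderiv ℝ f p) : (ℝ × ℝ) →ₗ[ℝ] E) = 2) ∧
      (p.2 = 0 → LinearMap.rank ((fderiv ℝ f p) : (ℝ × ℝ) →ₗ[ℝ] E) = 1) := by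
  have hcont : ContinuousOn (fun p => ![fderiv ℝ f p (0, 1), F p]) V :=
    continuousOn_pi.2 <| Fin.forall_fin_two.2
      ⟨((hf.continuousOn_fderiv_of_isOpen hV le_rfl).clm_apply continuousOn_const), hF⟩
  refine ⟨V ∩ (fun p => ![fderiv ℝ f p (0, 1), F p]) ⁻¹' {v | LinearIndependent ℝ v},
    hcont.isOpen_inter_preimage hV isOpen_setOfPred_linearIndependent, ⟨hp₀, hli⟩,
    Set.inter_subset_left, fun p ⟨hp, hpli⟩ => ⟨fun hs => ?_, fun hs => ?_⟩⟩
  · apply LinearMap.rank_eq_two_of_linearIndependent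
    have := (LinearIndependent.pair_add_smul_add_smul_iff 1 p.2 1 0).2
      ⟨hpli, by simpa using (Ne.symm hs)⟩
    simpa [hfF p hp] using this
  · refine LinearMap.rank_eq_one_of_apply_eq _ (by simpa [hs] using hfF p hp) ?_
    simpa using hpli.ne_zero 0

section PartialDerivatives

variable {𝕜 E : Type*} [NontriviallyNormedField 𝕜] [NormedAddCommGroup E] [NormedSpace 𝕜 E]
  {f : 𝕜 × 𝕜 → E} {p : 𝕜 × 𝕜}

theorem DifferentiableAt.deriv_comp_prodMk_left (hf : DifferentiableAt 𝕜 f p) :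
    deriv (fun u => f (u, p.2)) p.1 = fderiv 𝕜 f p (1, 0) :=
  (hf.hasFDerivAt.comp_hasDerivAt p.1 ((hasDerivAt_id _).prodMk (hasDerivAt_const _ _))).deriv

theorem DifferentiableAt.deriv_comp_prodMk_right (hf : DifferentiableAt 𝕜 f p) :
    deriv (fun u => f (p.1, u)) p.2 = fderiv 𝕜 f p (0, 1) :=
  (hf.hasFDerivAt.comp_hasDerivAt p.2 ((hasDerivAt_const _ _).prodMk (hasDerivAt_id _))).deriv

theorem fderiv_fderiv_sub_apply_snd [IsRCLikeNormedField 𝕜] {t s : 𝕜}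
    (hf : ContDiffAt 𝕜 2 f (t, s)) :
    fderiv 𝕜 (fun q => fderiv 𝕜 f q (1, 0) - fderiv 𝕜 f q (0, 1)) (t, s) (0, 1) =
      deriv (fun u => fderiv 𝕜 f (u, s) (0, 1)) t -
        deriv (fun u => fderiv 𝕜 f (t, u) (0, 1)) s := by
  set A := fderiv 𝕜 (fderiv 𝕜 f) (t, s)
  have hA : HasFDerivAt (fderiv 𝕜 f) A (t, s) :=
    (hf.fderiv_right (m := 1) le_rfl).differentiableAt one_ne_zero |>.hasFDerivAt
  have happly : ∀ v : 𝕜 × 𝕜, HasFDerivAt (fun q => fderiv 𝕜 f q v)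
      ((ContinuousLinearMap.apply 𝕜 E v).comp A) (t, s) := fun v =>
    (ContinuousLinearMap.apply 𝕜 E v).hasFDerivAt.comp (t, s) hA
  have hleft : HasDerivAt (fun u => fderiv 𝕜 f (u, s) (0, 1)) (A (1, 0) (0, 1)) t := by
    have := (happly (0, 1)).comp_hasDerivAt t ((hasDerivAt_id t).prodMk (hasDerivAt_const t s))
    exact this
  have hright : HasDerivAt (fun u => fderiv 𝕜 f (t, u) (0, 1)) (A (0, 1) (0, 1)) s := by
    have := (happly (0, 1)).comp_hasDerivAt s ((hasDerivAt_const s t).prodMk (hasDerivAt_id s))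
    exact this
  rw [((happly (1, 0)).fun_sub (happly (0, 1))).fderiv, hleft.deriv, hright.deriv]
  simp [A, hf.isSymmSndFDerivAt (by simp) (0, 1) (1, 0)]

end PartialDerivatives

theorem deriv_deriv_apply {ι : Type*} [Fintype ι] {S : Set ℝ} (hS : IsOpen S) {c : ℝ → ι → ℝ}
    (hc : ContDiffOn ℝ 2 c S) {x : ℝ} (hx : x ∈ S) (i : ι) :
    deriv (deriv fun s => c s i) x = deriv (deriv c) x i := by
  have hderiv : deriv (fun s => c s i) =ᶠ[𝓝 x] fun s => deriv c s i := by
    filter_upwards [hS.mem_nhds hx] with s hs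
    exact (hasDerivAt_pi.1 ((hc.differentiableOn two_ne_zero s hs).differentiableAt
      (hS.mem_nhds hs)).hasDerivAt i).deriv
  rw [hderiv.deriv_eq]
  have hc' := (hc.deriv_of_isOpen hS (m := 1) le_rfl).differentiableOn one_ne_zero x hx
  exact (hasDerivAt_pi.1 (hc'.differentiableAt (hS.mem_nhds hx)).hasDerivAt i).deriv

section Geodesic

variable {m : ℕ} {Γ : (Fin m → ℝ) → Fin m → Fin m → Fin m → ℝ} {Ω : Set (Fin m → ℝ)}
  {W : Set ((Fin m → ℝ) × (Fin m → ℝ) × ℝ)} {φ : (Fin m → ℝ) × (Fin m → ℝ) × ℝ → Fin m → ℝ}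
  {I : Set ℝ} {γ : ℝ → Fin m → ℝ} {V : Set (ℝ × ℝ)} {t : ℝ}

def christoffel (Γ : (Fin m → ℝ) → Fin m → Fin m → Fin m → ℝ) (x v w : Fin m → ℝ) :
    Fin m → ℝ :=
  fun l => ∑ μ, ∑ ν, Γ x l μ ν * v μ * w ν

theorem covDeriv_one (hγ : DifferentiableAt ℝ (deriv γ) t) :
    covDeriv Γ γ 1 t = deriv (deriv γ) t + christoffel Γ (γ t) (deriv γ t) (deriv γ t) := by
  funext l
  simp only [covDeriv, christoffel, Pi.add_apply]
  rw [(hasDerivAt_pi.1 hγ.hasDerivAt l).deriv]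

def tangentSurface (φ : (Fin m → ℝ) × (Fin m → ℝ) × ℝ → Fin m → ℝ) (γ : ℝ → Fin m → ℝ) :
    ℝ × ℝ → Fin m → ℝ :=
  fun p => φ (γ p.1, deriv γ p.1, p.2)

theorem contDiffOn_tangentSurface (hφ : ContDiffOn ℝ ∞ φ W) (hI : IsOpen I)
    (hγ : ContDiffOn ℝ ∞ γ I) (hVI : V ⊆ I ×ˢ univ)
    (hVW : ∀ p ∈ V, (γ p.1, deriv γ p.1, p.2) ∈ W) :
    ContDiffOn ℝ ∞ (tangentSurface φ γ) V := by
  have hV₁ : MapsTo Prod.fst V I := fun p hp => (hVI hp).1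
  refine hφ.comp ?_ hVW
  exact (hγ.comp contDiffOn_fst hV₁).prodMk
    (((hγ.deriv_of_isOpen hI le_rfl).comp contDiffOn_fst hV₁).prodMk contDiffOn_snd)

namespace IsGeodesicFlow

theorem deriv_deriv_zero (hφ : IsGeodesicFlow Γ Ω W φ) {x : Fin m → ℝ} (hx : x ∈ Ω)
    (v : Fin m → ℝ) : deriv (deriv fun s => φ (x, v, s)) 0 = -christoffel Γ x v v := by
  set S := {s : ℝ | (x, v, s) ∈ W}
  have hS : IsOpen S := hφ.isOpen_W.preimage (by fun_prop)
  have h0 : (0 : ℝ) ∈ S := hφ.mem_zero x hx v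
  have hc : ContDiffOn ℝ ∞ (fun s => φ (x, v, s)) S :=
    hφ.smooth.comp (by fun_prop : ContDiff ℝ ∞ fun s : ℝ => (x, v, s)).contDiffOn fun _ hs => hs
  have hvel : ∀ μ, deriv (fun s => φ (x, v, s) μ) 0 = v μ := fun μ => by
    rw [(hasDerivAt_pi.1 ((hc.differentiableOn (by simp) 0 h0).differentiableAt
      (hS.mem_nhds h0)).hasDerivAt μ).deriv, hφ.init_vel x hx v]
  funext l
  have hgeo := hφ.geodesic (x, v, 0) h0 l
  simp only [hφ.init_pos x hx v, hvel,
    deriv_deriv_apply hS (hc.of_le (WithTop.coe_le_coe.2 le_top)) h0] at hgeo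
  simpa [christoffel] using eq_neg_of_add_eq_zero_left hgeo

theorem fderiv_tangentSurface_apply_snd (hφ : IsGeodesicFlow Γ Ω W φ) (hγt : γ t ∈ Ω)
    (hf : DifferentiableAt ℝ (tangentSurface φ γ) (t, 0)) :
    fderiv ℝ (tangentSurface φ γ) (t, 0) (0, 1) = deriv γ t := by
  rw [← hf.deriv_comp_prodMk_right]
  exact hφ.init_vel (γ t) hγt (deriv γ t)

theorem fderiv_tangentSurface_apply_fst (hφ : IsGeodesicFlow Γ Ω W φ) (hI : IsOpen I)
    (hγΩ : ∀ t ∈ I, γ t ∈ Ω) (ht : t ∈ I)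
    (hf : DifferentiableAt ℝ (tangentSurface φ γ) (t, 0)) :
    fderiv ℝ (tangentSurface φ γ) (t, 0) (1, 0) = deriv γ t := by
  rw [← hf.deriv_comp_prodMk_left]
  refine Filter.EventuallyEq.deriv_eq ?_
  filter_upwards [hI.mem_nhds ht] with u hu using hφ.init_pos _ (hγΩ u hu) _

theorem fderiv_fderiv_tangentSurface_sub_apply_snd (hφ : IsGeodesicFlow Γ Ω W φ)
    (hI : IsOpen I) (hγ : ContDiffOn ℝ ∞ γ I) (hγΩ : ∀ t ∈ I, γ t ∈ Ω) (hV : IsOpen V)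
    (hf : ContDiffOn ℝ ∞ (tangentSurface φ γ) V) (hV0 : ∀ t ∈ I, (t, (0 : ℝ)) ∈ V) (ht : t ∈ I) :
    fderiv ℝ (fun q => fderiv ℝ (tangentSurface φ γ) q (1, 0) -
      fderiv ℝ (tangentSurface φ γ) q (0, 1)) (t, 0) (0, 1) = covDeriv Γ γ 1 t := by
  have hdiff : ∀ q ∈ V, DifferentiableAt ℝ (tangentSurface φ γ) q := fun q hq =>
    (hf.differentiableOn (by simp) q hq).differentiableAt (hV.mem_nhds hq)
  have hγ' : DifferentiableAt ℝ (deriv γ) t :=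
    ((hγ.deriv_of_isOpen hI (m := ∞) le_rfl).differentiableOn (by simp) t ht).differentiableAt
      (hI.mem_nhds ht)
  have hleft : deriv (fun u => fderiv ℝ (tangentSurface φ γ) (u, 0) (0, 1)) t =
      deriv (deriv γ) t := by
    refine Filter.EventuallyEq.deriv_eq ?_
    filter_upwards [hI.mem_nhds ht] with u hu using
      hφ.fderiv_tangentSurface_apply_snd (hγΩ u hu) (hdiff _ (hV0 u hu))
  have hright : deriv (fun σ => fderiv ℝ (tangentSurface φ γ) (t, σ) (0, 1)) 0 =
      deriv (deriv fun σ => φ (γ t, deriv γ t, σ)) 0 := by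
    refine Filter.EventuallyEq.deriv_eq ?_
    have hVt : IsOpen {σ : ℝ | (t, σ) ∈ V} := hV.preimage (by fun_prop)
    filter_upwards [hVt.mem_nhds (hV0 t ht)] with σ hσ using
      ((hdiff _ hσ).deriv_comp_prodMk_right).symm
  rw [fderiv_fderiv_sub_apply_snd ((hf.contDiffAt (hV.mem_nhds (hV0 t ht))).of_le
    (WithTop.coe_le_coe.2 le_top)), hleft, hright, hφ.deriv_deriv_zero (hγΩ t ht),
    covDeriv_one hγ', sub_neg_eq_add]

end IsGeodesicFlow

end Geodesic

theorem tangent_surface_frontal_general (m : ℕ)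
    (Γ : (Fin m → ℝ) → Fin m → Fin m → Fin m → ℝ)
    (Ω : Set (Fin m → ℝ))
    (W : Set ((Fin m → ℝ) × (Fin m → ℝ) × ℝ))
    (φ : (Fin m → ℝ) × (Fin m → ℝ) × ℝ → Fin m → ℝ)
    (hφ : IsGeodesicFlow Γ Ω W φ)
    (I : Set ℝ) (hI : IsOpen I)
    (γ : ℝ → Fin m → ℝ) (hγ : ContDiffOn ℝ (⊤ : ℕ∞) γ I) (hγΩ : ∀ t ∈ I, γ t ∈ Ω)
    (V : Set (ℝ × ℝ)) (hV : IsOpen V) (hVI : V ⊆ I ×ˢ univ)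
    (hV0 : ∀ t ∈ I, (t, (0 : ℝ)) ∈ V)
    (hVW : ∀ p ∈ V, (γ p.1, deriv γ p.1, p.2) ∈ W)
    (f : ℝ × ℝ → Fin m → ℝ)
    (hf : ∀ p : ℝ × ℝ, f p = φ (γ p.1, deriv γ p.1, p.2)) :
    (∃ F : ℝ × ℝ → Fin m → ℝ,
      ContDiffOn ℝ (⊤ : ℕ∞) F V ∧
      (∀ p ∈ V, p.2 • F p =
        deriv (fun u => f (u, p.2)) p.1 - deriv (fun u => f (p.1, u)) p.2) ∧
      ∀ t ∈ I, F (t, 0) = covDeriv Γ γ 1 t) ∧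
    ∀ t₀ ∈ I,
      LinearIndependent ℝ ![covDeriv Γ γ 0 t₀, covDeriv Γ γ 1 t₀] →
      ∃ U : Set (ℝ × ℝ), IsOpen U ∧ (t₀, (0 : ℝ)) ∈ U ∧ U ⊆ V ∧
        ∀ p ∈ U,
          (p.2 ≠ 0 →
            LinearMap.rank ((fderiv ℝ f p) : (ℝ × ℝ) →ₗ[ℝ] (Fin m → ℝ)) = 2) ∧
          (p.2 = 0 →
            LinearMap.rank ((fderiv ℝ f p) : (ℝ × ℝ) →ₗ[ℝ] (Fin m → ℝ)) = 1) := by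
  obtain rfl : f = tangentSurface φ γ := funext hf
  set f := tangentSurface φ γ
  have hfV : ContDiffOn ℝ ∞ f V := contDiffOn_tangentSurface hφ.smooth hI hγ hVI hVW
  have hdiff : ∀ p ∈ V, DifferentiableAt ℝ f p := fun p hp =>
    (hfV.differentiableOn (by simp) p hp).differentiableAt (hV.mem_nhds hp)
  have hfV' := hfV.fderiv_of_isOpen hV (m := ∞) le_rfl
  obtain ⟨F, hF, hsF, hF0⟩ := exists_contDiffOn_smul_eq_of_eq_zero hV
    (g := fun q => fderiv ℝ f q (1, 0) - fderiv ℝ f q (0, 1))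
    ((hfV'.clm_apply contDiffOn_const).sub (hfV'.clm_apply contDiffOn_const))
    fun p hp hp0 => by
      obtain ⟨t, rfl⟩ : ∃ t, p = (t, 0) := ⟨p.1, Prod.ext rfl hp0⟩
      have ht : t ∈ I := (hVI hp).1
      rw [hφ.fderiv_tangentSurface_apply_fst hI hγΩ ht (hdiff _ hp),
        hφ.fderiv_tangentSurface_apply_snd (hγΩ t ht) (hdiff _ hp), sub_self]
  have hFcov : ∀ t ∈ I, F (t, 0) = covDeriv Γ γ 1 t := fun t ht => by
    rw [hF0 _ (hV0 t ht) rfl,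
      hφ.fderiv_fderiv_tangentSurface_sub_apply_snd hI hγ hγΩ hV hfV hV0 ht]
  refine ⟨⟨F, hF, fun p hp => ?_, hFcov⟩, fun t₀ ht₀ hli => ?_⟩
  · rw [hsF p hp, (hdiff p hp).deriv_comp_prodMk_left, (hdiff p hp).deriv_comp_prodMk_right]
  · refine exists_isOpen_rank_fderiv_eq hV (hfV.of_le (by simp)) hF.continuousOn
      (fun p hp => by rw [hsF p hp]; abel) (hV0 t₀ ht₀) ?_
    rwa [hφ.fderiv_tangentSurface_apply_snd (hγΩ t₀ ht₀) (hdiff _ (hV0 t₀ ht₀)), hFcov t₀ ht₀]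

/-- For the `∇`-tangent surface `f(t,s) = φ(γ(t), γ'(t), s)` of a `C^∞`
curve `γ : I → Ω`, defined on an open neighborhood `V` of `I × {0}`:
(i) there is a `C^∞` map `F : V → ℝ^m` with `s F(t,s) = ∂f/∂t − ∂f/∂s` on `V` and
`F(t,0) = ∇²γ(t)`; (ii) if `∇γ(t₀)` and `∇²γ(t₀)` are linearly independent, then near
`(t₀,0)` the differential of `f` has rank `2` for `s ≠ 0` and rank `1` for `s = 0`. -/
theorem tangent_surface_frontal (m : ℕ)
    (Γ : (Fin m → ℝ) → Fin m → Fin m → Fin m → ℝ)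
    (Ω : Set (Fin m → ℝ)) (hΩ : IsOpen Ω)
    (hΓ : ∀ l μ ν, ContDiffOn ℝ (⊤ : ℕ∞) (fun x => Γ x l μ ν) Ω)
    (W : Set ((Fin m → ℝ) × (Fin m → ℝ) × ℝ))
    (φ : (Fin m → ℝ) × (Fin m → ℝ) × ℝ → Fin m → ℝ)
    (hφ : IsGeodesicFlow Γ Ω W φ)
    (I : Set ℝ) (hI : IsOpen I) (hI' : I.OrdConnected)
    (γ : ℝ → Fin m → ℝ) (hγ : ContDiffOn ℝ (⊤ : ℕ∞) γ I) (hγΩ : ∀ t ∈ I, γ t ∈ Ω)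
    (V : Set (ℝ × ℝ)) (hV : IsOpen V) (hVI : V ⊆ I ×ˢ univ)
    (hV0 : ∀ t ∈ I, (t, (0 : ℝ)) ∈ V)
    (hVW : ∀ p ∈ V, (γ p.1, deriv γ p.1, p.2) ∈ W)
    (f : ℝ × ℝ → Fin m → ℝ)
    (hf : ∀ p : ℝ × ℝ, f p = φ (γ p.1, deriv γ p.1, p.2)) :
    (∃ F : ℝ × ℝ → Fin m → ℝ,
      ContDiffOn ℝ (⊤ : ℕ∞) F V ∧
      (∀ p ∈ V, p.2 • F p =
        deriv (fun u => f (u, p.2)) p.1 - deriv (fun u => f (p.1, u)) p.2) ∧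
      ∀ t ∈ I, F (t, 0) = covDeriv Γ γ 1 t) ∧
    ∀ t₀ ∈ I,
      LinearIndependent ℝ ![covDeriv Γ γ 0 t₀, covDeriv Γ γ 1 t₀] →
      ∃ U : Set (ℝ × ℝ), IsOpen U ∧ (t₀, (0 : ℝ)) ∈ U ∧ U ⊆ V ∧
        ∀ p ∈ U,
          (p.2 ≠ 0 →
            LinearMap.rank ((fderiv ℝ f p) : (ℝ × ℝ) →ₗ[ℝ] (Fin m → ℝ)) = 2) ∧
          (p.2 = 0 →
            LinearMap.rank ((fderiv ℝ f p) : (ℝ × ℝ) →ₗ[ℝ] (Fin m → ℝ)) = 1) :=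
  tangent_surface_frontal_general m Γ Ω W φ hφ I hI γ hγ hγΩ V hV hVI hV0 hVW f hf
end
end

section
/- Let m ≥ 3, let γ : I → ℝ^m be a C^∞ curve on an open interval with γ'(t₀) and γ''(t₀) linearly independent, and let ℓ₁, …, ℓ_{m−2} : I → (ℝ^m)^* be C^∞ maps into the dual space such that for every t near t₀ the covectors ℓ₁(t), …, ℓ_{m−2}(t) are linearly independent and ℓ_i(t)(γ'(t)) = 0 and ℓ_i(t)(γ''(t)) = 0 for all i. Set ψ_i(t) = ℓ_i(t)(γ'''(t)). If γ'(t₀), γ''(t₀), γ'''(t₀) are linearly dependent (i.e. ψ_i(t₀) = 0 for all i), then ψ_i'(t₀) = ℓ_i(t₀)(γ⁽⁴⁾(t₀)) for every i; consequently (ψ₁'(t₀), …, ψ_{m−2}'(t₀)) ≠ 0 if and only if γ'(t₀), γ''(t₀), γ⁽⁴⁾(t₀) are linearly independent. -/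
open Set

noncomputable section

/-- With `γ`, `ℓᵢ` as in Statement 13 and `ψᵢ(t) = ℓᵢ(t)(γ'''(t))`, if
`γ'(t₀), γ''(t₀), γ'''(t₀)` are linearly dependent then `ψᵢ'(t₀) = ℓᵢ(t₀)(γ⁽⁴⁾(t₀))`
for all `i`; consequently `(ψ₁'(t₀), …, ψ_{m−2}'(t₀)) ≠ 0` iff
`γ'(t₀), γ''(t₀), γ⁽⁴⁾(t₀)` are linearly independent. -/
theorem characteristic_function_derivative (m : ℕ) (hm : 3 ≤ m)
    (I : Set ℝ) (hI : IsOpen I) (hI' : I.OrdConnected)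
    (γ : ℝ → Fin m → ℝ) (hγ : ContDiffOn ℝ (⊤ : ℕ∞) γ I)
    (t₀ : ℝ) (ht₀ : t₀ ∈ I)
    (hind : LinearIndependent ℝ ![deriv γ t₀, deriv (deriv γ) t₀])
    (ℓ : Fin (m - 2) → ℝ → (Fin m → ℝ) →L[ℝ] ℝ)
    (hℓ : ∀ i, ContDiffOn ℝ (⊤ : ℕ∞) (ℓ i) I)
    (hℓind : ∀ᶠ t in nhds t₀, LinearIndependent ℝ (fun i => ℓ i t))
    (hℓ1 : ∀ᶠ t in nhds t₀, ∀ i, ℓ i t (deriv γ t) = 0)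
    (hℓ2 : ∀ᶠ t in nhds t₀, ∀ i, ℓ i t (deriv (deriv γ) t) = 0)
    (hdep : ¬ LinearIndependent ℝ
      ![deriv γ t₀, deriv (deriv γ) t₀, deriv (deriv (deriv γ)) t₀]) :
    (∀ i, deriv (fun t => ℓ i t (deriv (deriv (deriv γ)) t)) t₀ =
      ℓ i t₀ (deriv (deriv (deriv (deriv γ))) t₀)) ∧
    ((∃ i, deriv (fun t => ℓ i t (deriv (deriv (deriv γ)) t)) t₀ ≠ 0) ↔
      LinearIndependent ℝ
        ![deriv γ t₀, deriv (deriv γ) t₀, deriv (deriv (deriv (deriv γ))) t₀]) := by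
  have hmem : I ∈ nhds t₀ := hI.mem_nhds ht₀
  set g1 := deriv γ with hg1
  set g2 := deriv g1 with hg2
  set g3 := deriv g2 with hg3
  set g4 := deriv g3 with hg4
  set a := g1 t₀ with ha
  set b := g2 t₀ with hb
  -- smoothness of derivatives
  have h1 : ContDiffOn ℝ (⊤ : ℕ∞) g1 I := hγ.deriv_of_isOpen hI (by simp)
  have h2 : ContDiffOn ℝ (⊤ : ℕ∞) g2 I := h1.deriv_of_isOpen hI (by simp)
  have h3 : ContDiffOn ℝ (⊤ : ℕ∞) g3 I := h2.deriv_of_isOpen hI (by simp)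
  have D1 : HasDerivAt g1 (g2 t₀) t₀ :=
    ((h1.differentiableOn (by simp)).differentiableAt hmem).hasDerivAt
  have D2 : HasDerivAt g2 (g3 t₀) t₀ :=
    ((h2.differentiableOn (by simp)).differentiableAt hmem).hasDerivAt
  have D3 : HasDerivAt g3 (g4 t₀) t₀ :=
    ((h3.differentiableOn (by simp)).differentiableAt hmem).hasDerivAt
  have Dℓ : ∀ i, HasDerivAt (ℓ i) (deriv (ℓ i) t₀) t₀ := fun i =>
    (((hℓ i).differentiableOn (by simp)).differentiableAt hmem).hasDerivAt
  -- pointwise facts at t₀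
  have hLa : ∀ i, ℓ i t₀ a = 0 := hℓ1.self_of_nhds
  have hLb : ∀ i, ℓ i t₀ b = 0 := hℓ2.self_of_nhds
  -- γ''' at t₀ lies in span {a, b}
  have hsnoc : ∀ v : Fin m → ℝ, (![a, b, v] : Fin 3 → Fin m → ℝ) = Fin.snoc ![a, b] v := by
    intro v; funext i; fin_cases i <;> rfl
  have hrange : Set.range ![a, b] = {a, b} := by simp [Set.pair_comm]
  have hspan_iff : ∀ v : Fin m → ℝ, LinearIndependent ℝ ![a, b, v] ↔
      v ∉ Submodule.span ℝ ({a, b} : Set (Fin m → ℝ)) := by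
    intro v
    rw [hsnoc v, linearIndependent_fin_snoc, hrange]
    exact ⟨fun h => h.2, fun h => ⟨hind, h⟩⟩
  have hc3 : g3 t₀ ∈ Submodule.span ℝ ({a, b} : Set (Fin m → ℝ)) := by
    by_contra h; exact hdep ((hspan_iff _).mpr h)
  obtain ⟨x, y, hxy⟩ := Submodule.mem_span_pair.mp hc3
  have hLc3 : ∀ i, ℓ i t₀ (g3 t₀) = 0 := by
    intro i
    rw [← hxy, map_add, map_smul, map_smul, hLa i, hLb i]
    simp
  -- derivative computations and vanishing of ℓᵢ'(t₀) on a, b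
  have hDa : ∀ i, deriv (ℓ i) t₀ a = 0 := by
    intro i
    have hz : deriv (fun t => ℓ i t (g1 t)) t₀ = 0 := by
      have he : (fun t => ℓ i t (g1 t)) =ᶠ[nhds t₀] fun _ => (0 : ℝ) :=
        hℓ1.mono fun t ht => ht i
      rw [he.deriv_eq]; exact deriv_const _ _
    have hd := ((Dℓ i).clm_apply D1).deriv
    rw [hz] at hd
    have := hLb i
    rw [← hb] at hd
    linarith [hd, this]
  have hDb : ∀ i, deriv (ℓ i) t₀ b = 0 := by
    intro i
    have hz : deriv (fun t => ℓ i t (g2 t)) t₀ = 0 := by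
      have he : (fun t => ℓ i t (g2 t)) =ᶠ[nhds t₀] fun _ => (0 : ℝ) :=
        hℓ2.mono fun t ht => ht i
      rw [he.deriv_eq]; exact deriv_const _ _
    have hd := ((Dℓ i).clm_apply D2).deriv
    rw [hz] at hd
    have := hLc3 i
    linarith [hd, this]
  have part1 : ∀ i, deriv (fun t => ℓ i t (g3 t)) t₀ = ℓ i t₀ (g4 t₀) := by
    intro i
    have hd := ((Dℓ i).clm_apply D3).deriv
    have hz : deriv (ℓ i) t₀ (g3 t₀) = 0 := by
      rw [← hxy, map_add, map_smul, map_smul, hDa i, hDb i]; simp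
    rw [hd, hz, zero_add]
  refine ⟨part1, ?_⟩
  -- linear algebra: the ℓᵢ(t₀) span the annihilator of span {a, b}
  set L : Fin (m - 2) → Module.Dual ℝ (Fin m → ℝ) :=
    fun i => (ℓ i t₀ : (Fin m → ℝ) →ₗ[ℝ] ℝ) with hL
  have hLind : LinearIndependent ℝ L := by
    have h := hℓind.self_of_nhds
    exact h.map' (ContinuousLinearMap.coeLM ℝ)
      (LinearMap.ker_eq_bot.mpr ContinuousLinearMap.coe_injective)
  set Φ : Submodule ℝ (Module.Dual ℝ (Fin m → ℝ)) := Submodule.span ℝ (Set.range L) with hΦ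
  have hΦrank : Module.finrank ℝ Φ = m - 2 := by
    rw [hΦ, finrank_span_eq_card hLind, Fintype.card_fin]
  have hcoannW : ∀ v : Fin m → ℝ, (∀ i, ℓ i t₀ v = 0) → v ∈ Φ.dualCoannihilator := by
    intro v hv
    rw [Submodule.mem_dualCoannihilator]
    intro φ hφ
    induction hφ using Submodule.span_induction with
    | mem ψ hψ => obtain ⟨i, rfl⟩ := hψ; exact hv i
    | zero => simp
    | add φ₁ φ₂ _ _ h₁ h₂ => simp [h₁, h₂]
    | smul c φ₁ _ h₁ => simp [h₁]
  have hW_le : Submodule.span ℝ ({a, b} : Set (Fin m → ℝ)) ≤ Φ.dualCoannihilator := by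
    rw [Submodule.span_le]
    rintro v hv
    simp only [Set.mem_insert_iff, Set.mem_singleton_iff] at hv
    rcases hv with rfl | rfl
    · exact hcoannW _ hLa
    · exact hcoannW _ hLb
  have hWrank : Module.finrank ℝ (Submodule.span ℝ ({a, b} : Set (Fin m → ℝ))) = 2 := by
    rw [← hrange, finrank_span_eq_card hind, Fintype.card_fin]
  have hVrank : Module.finrank ℝ (Fin m → ℝ) = m := Module.finrank_fin_fun ℝ
  have hsum := Subspace.finrank_add_finrank_dualCoannihilator_eq Φ
  rw [hΦrank, hVrank] at hsum
  have hCrank : Module.finrank ℝ Φ.dualCoannihilator = 2 := by omega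
  have hWeq : Submodule.span ℝ ({a, b} : Set (Fin m → ℝ)) = Φ.dualCoannihilator :=
    Submodule.eq_of_le_of_finrank_le hW_le (by rw [hCrank, hWrank])
  have hmemW : ∀ v : Fin m → ℝ,
      v ∈ Submodule.span ℝ ({a, b} : Set (Fin m → ℝ)) ↔ ∀ i, ℓ i t₀ v = 0 := by
    intro v
    constructor
    · intro h i
      rw [hWeq, Submodule.mem_dualCoannihilator] at h
      exact h (L i) (Submodule.subset_span ⟨i, rfl⟩)
    · intro h; rw [hWeq]; exact hcoannW v h
  simp only [part1, hspan_iff (g4 t₀), hmemW (g4 t₀)]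
  push_neg
  rfl
end
end

section
/- Let Ω ⊆ ℝ^m (m ≥ 3) be open with torsion-free C^∞ Christoffel symbols Γ^λ_{μν} : Ω → ℝ, and let γ : I → Ω be a C^∞ curve with (∇γ)(t₀) and (∇²γ)(t₀) linearly independent. Let ℓ₁, …, ℓ_{m−2} : I → (ℝ^m)^* be C^∞ maps into the dual space such that for every t near t₀ the covectors ℓ₁(t), …, ℓ_{m−2}(t) are linearly independent and ℓ_i(t)((∇γ)(t)) = 0 and ℓ_i(t)((∇²γ)(t)) = 0 for all i. Set ψ_i(t) = ℓ_i(t)((∇³γ)(t)). If (∇γ)(t₀), (∇²γ)(t₀), (∇³γ)(t₀) are linearly dependent (i.e. ψ_i(t₀) = 0 for all i), then ψ_i'(t₀) = ℓ_i(t₀)((∇⁴γ)(t₀)) for every i. -/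
/-!
Write `∇ᵏ⁺¹γ = (∇ᵏγ)' + A ∇ᵏγ` with `A^λ_ν = Σ_μ Γ^λ_{μν}(γ) (γ^μ)'`. With the dual connection
`(∇ℓ)(v) = ℓ'(v) - ℓ(A v)` on covector fields along `γ` one has the Leibniz rule
`(ℓ(∇ᵏγ))' = (∇ℓ)(∇ᵏγ) + ℓ(∇ᵏ⁺¹γ)`. Differentiating `ℓ(∇γ) ≡ 0` and `ℓ(∇²γ) ≡ 0` near `t₀` gives
`(∇ℓ)(∇γ) = -ℓ(∇²γ) = 0` and `(∇ℓ)(∇²γ) = -ℓ(∇³γ)`, and at `t₀` the latter vanishes because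
`∇³γ(t₀)` lies in the span of `∇γ(t₀), ∇²γ(t₀)`. Hence `(∇ℓ)(t₀)` kills that span, in particular
`∇³γ(t₀)`, and `ψ'(t₀) = ℓ(t₀)(∇⁴γ(t₀))`.
-/

open Topology Matrix

noncomputable section

def connectionMatrix {m : ℕ} (Γ : (Fin m → ℝ) → Fin m → Fin m → Fin m → ℝ)
    (γ : ℝ → Fin m → ℝ) (t : ℝ) : Matrix (Fin m) (Fin m) ℝ :=
  fun l ν => ∑ μ, Γ (γ t) l μ ν * deriv γ t μ

def dualCovDeriv {m : ℕ} (Γ : (Fin m → ℝ) → Fin m → Fin m → Fin m → ℝ)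
    (γ : ℝ → Fin m → ℝ) (ℓ : ℝ → (Fin m → ℝ) →L[ℝ] ℝ) (t : ℝ) : (Fin m → ℝ) →ₗ[ℝ] ℝ :=
  (deriv ℓ t).toLinearMap - (ℓ t).toLinearMap ∘ₗ (connectionMatrix Γ γ t).mulVecLin

section CovariantDerivative

variable {m : ℕ} (Γ : (Fin m → ℝ) → Fin m → Fin m → Fin m → ℝ) (γ : ℝ → Fin m → ℝ)

theorem contDiffOn_covDeriv {Ω : Set (Fin m → ℝ)}
    (hΓ : ∀ l μ ν, ContDiffOn ℝ (⊤ : ℕ∞) (fun x => Γ x l μ ν) Ω)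
    {I : Set ℝ} (hI : IsOpen I) (hγ : ContDiffOn ℝ (⊤ : ℕ∞) γ I) (hγΩ : ∀ t ∈ I, γ t ∈ Ω)
    (k : ℕ) : ContDiffOn ℝ (⊤ : ℕ∞) (covDeriv Γ γ k) I := by
  have hγ' : ∀ l, ContDiffOn ℝ (⊤ : ℕ∞) (fun t => deriv γ t l) I :=
    contDiffOn_pi.1 (hγ.deriv_of_isOpen hI (by simp))
  induction k with
  | zero => exact contDiffOn_pi.2 hγ'
  | succ k ih =>
    refine contDiffOn_pi.2 fun l => ?_
    have hderiv : ContDiffOn ℝ (⊤ : ℕ∞) (deriv fun u => covDeriv Γ γ k u l) I :=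
      (contDiffOn_pi.1 ih l).deriv_of_isOpen hI (by simp)
    have hconn : ContDiffOn ℝ (⊤ : ℕ∞)
        (fun t => ∑ μ, ∑ ν, Γ (γ t) l μ ν * deriv γ t μ * covDeriv Γ γ k t ν) I :=
      ContDiffOn.sum fun μ _ => ContDiffOn.sum fun ν _ =>
        (((hΓ l μ ν).comp hγ hγΩ).mul (hγ' μ)).mul (contDiffOn_pi.1 ih ν)
    exact hderiv.add hconn

theorem covDeriv_succ {k : ℕ} {t : ℝ} (hk : DifferentiableAt ℝ (covDeriv Γ γ k) t) :
    covDeriv Γ γ (k + 1) t =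
      deriv (covDeriv Γ γ k) t + connectionMatrix Γ γ t *ᵥ covDeriv Γ γ k t := by
  ext l
  rw [deriv_pi fun l => differentiableAt_pi.1 hk l]
  simp only [covDeriv, Pi.add_apply, Matrix.mulVec, dotProduct, connectionMatrix,
    Finset.sum_mul]
  rw [Finset.sum_comm]

theorem hasDerivAt_apply_covDeriv {ℓ : ℝ → (Fin m → ℝ) →L[ℝ] ℝ} {k : ℕ} {t : ℝ}
    (hℓ : DifferentiableAt ℝ ℓ t) (hk : DifferentiableAt ℝ (covDeriv Γ γ k) t) :
    HasDerivAt (fun s => ℓ s (covDeriv Γ γ k s))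
      (dualCovDeriv Γ γ ℓ t (covDeriv Γ γ k t) + ℓ t (covDeriv Γ γ (k + 1) t)) t := by
  refine (hℓ.hasDerivAt.clm_apply hk.hasDerivAt).congr_deriv ?_
  simp only [dualCovDeriv, covDeriv_succ Γ γ hk, LinearMap.sub_apply, LinearMap.comp_apply,
    ContinuousLinearMap.coe_coe, Matrix.mulVecLin_apply, map_add]
  ring

end CovariantDerivative

theorem HasDerivAt.eq_zero_of_eventuallyEq_zero {f : ℝ → ℝ} {f' t : ℝ} (hf : HasDerivAt f f' t)
    (h : ∀ᶠ s in 𝓝 t, f s = 0) : f' = 0 :=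
  hf.unique ((hasDerivAt_const t 0).congr_of_eventuallyEq h)

theorem LinearMap.map_eq_zero_of_not_linearIndependent_triple {K V W : Type*} [DivisionRing K]
    [AddCommGroup V] [Module K V] [AddCommGroup W] [Module K W] (f : V →ₗ[K] W) {u v w : V}
    (huv : LinearIndependent K ![u, v]) (huvw : ¬ LinearIndependent K ![u, v, w])
    (hu : f u = 0) (hv : f v = 0) : f w = 0 := by
  have hw : w ∈ Submodule.span K (Set.range ![u, v]) := by
    have : (![u, v, w] : Fin 3 → V) = Fin.snoc ![u, v] w := by simp
    rw [this, linearIndependent_finSnoc] at huvw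
    by_contra hw
    exact huvw ⟨huv, hw⟩
  have hker : Submodule.span K (Set.range ![u, v]) ≤ LinearMap.ker f := by
    rw [Submodule.span_le, Set.range_subset_iff]
    intro j
    fin_cases j <;> simpa
  exact hker hw

theorem characteristic_function_derivative_covariant_general (m : ℕ)
    (Γ : (Fin m → ℝ) → Fin m → Fin m → Fin m → ℝ)
    (Ω : Set (Fin m → ℝ))
    (hΓ : ∀ l μ ν, ContDiffOn ℝ (⊤ : ℕ∞) (fun x => Γ x l μ ν) Ω)
    (I : Set ℝ) (hI : IsOpen I)
    (γ : ℝ → Fin m → ℝ) (hγ : ContDiffOn ℝ (⊤ : ℕ∞) γ I) (hγΩ : ∀ t ∈ I, γ t ∈ Ω)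
    (t₀ : ℝ) (ht₀ : t₀ ∈ I)
    (hind : LinearIndependent ℝ ![covDeriv Γ γ 0 t₀, covDeriv Γ γ 1 t₀])
    (ℓ : Fin (m - 2) → ℝ → (Fin m → ℝ) →L[ℝ] ℝ)
    (hℓ : ∀ i, ContDiffOn ℝ (⊤ : ℕ∞) (ℓ i) I)
    (hℓ1 : ∀ᶠ t in nhds t₀, ∀ i, ℓ i t (covDeriv Γ γ 0 t) = 0)
    (hℓ2 : ∀ᶠ t in nhds t₀, ∀ i, ℓ i t (covDeriv Γ γ 1 t) = 0)
    (hdep : ¬ LinearIndependent ℝ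
      ![covDeriv Γ γ 0 t₀, covDeriv Γ γ 1 t₀, covDeriv Γ γ 2 t₀]) :
    ∀ i, deriv (fun t => ℓ i t (covDeriv Γ γ 2 t)) t₀ =
      ℓ i t₀ (covDeriv Γ γ 3 t₀) := by
  intro i
  have hdiff : ∀ k, DifferentiableAt ℝ (covDeriv Γ γ k) t₀ := fun k =>
    ((contDiffOn_covDeriv Γ γ hΓ hI hγ hγΩ k).differentiableOn (by simp)).differentiableAt
      (hI.mem_nhds ht₀)
  have hℓdiff : DifferentiableAt ℝ (ℓ i) t₀ :=
    ((hℓ i).differentiableOn (by simp)).differentiableAt (hI.mem_nhds ht₀)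
  have hψ := fun k => hasDerivAt_apply_covDeriv Γ γ hℓdiff (hdiff k)
  set N := dualCovDeriv Γ γ (ℓ i) t₀
  have hL0 : ℓ i t₀ (covDeriv Γ γ 0 t₀) = 0 := hℓ1.self_of_nhds i
  have hL1 : ℓ i t₀ (covDeriv Γ γ 1 t₀) = 0 := hℓ2.self_of_nhds i
  have hL2 : ℓ i t₀ (covDeriv Γ γ 2 t₀) = 0 :=
    (ℓ i t₀).toLinearMap.map_eq_zero_of_not_linearIndependent_triple hind hdep hL0 hL1
  have hN0 : N (covDeriv Γ γ 0 t₀) = 0 := by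
    simpa [hL1] using (hψ 0).eq_zero_of_eventuallyEq_zero (hℓ1.mono fun t ht => ht i)
  have hN1 : N (covDeriv Γ γ 1 t₀) = 0 := by
    simpa [hL2] using (hψ 1).eq_zero_of_eventuallyEq_zero (hℓ2.mono fun t ht => ht i)
  have hN2 := N.map_eq_zero_of_not_linearIndependent_triple hind hdep hN0 hN1
  rw [(hψ 2).deriv, hN2, zero_add]

/-- For a torsion-free connection on `Ω ⊆ ℝ^m` (`m ≥ 3`), a `C^∞` curve
`γ : I → Ω` with `∇γ(t₀), ∇²γ(t₀)` linearly independent, and a `C^∞` coframe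
`ℓ₁, …, ℓ_{m−2}` annihilating `∇γ` and `∇²γ` near `t₀`, set `ψᵢ(t) = ℓᵢ(t)(∇³γ(t))`.
If `∇γ(t₀), ∇²γ(t₀), ∇³γ(t₀)` are linearly dependent, then
`ψᵢ'(t₀) = ℓᵢ(t₀)(∇⁴γ(t₀))` for every `i`. -/
theorem characteristic_function_derivative_covariant (m : ℕ) (hm : 3 ≤ m)
    (Γ : (Fin m → ℝ) → Fin m → Fin m → Fin m → ℝ)
    (Ω : Set (Fin m → ℝ)) (hΩ : IsOpen Ω)
    (hΓ : ∀ l μ ν, ContDiffOn ℝ (⊤ : ℕ∞) (fun x => Γ x l μ ν) Ω)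
    (hTF : ∀ x l μ ν, Γ x l μ ν = Γ x l ν μ)
    (I : Set ℝ) (hI : IsOpen I) (hI' : I.OrdConnected)
    (γ : ℝ → Fin m → ℝ) (hγ : ContDiffOn ℝ (⊤ : ℕ∞) γ I) (hγΩ : ∀ t ∈ I, γ t ∈ Ω)
    (t₀ : ℝ) (ht₀ : t₀ ∈ I)
    (hind : LinearIndependent ℝ ![covDeriv Γ γ 0 t₀, covDeriv Γ γ 1 t₀])
    (ℓ : Fin (m - 2) → ℝ → (Fin m → ℝ) →L[ℝ] ℝ)
    (hℓ : ∀ i, ContDiffOn ℝ (⊤ : ℕ∞) (ℓ i) I)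
    (hℓind : ∀ᶠ t in nhds t₀, LinearIndependent ℝ (fun i => ℓ i t))
    (hℓ1 : ∀ᶠ t in nhds t₀, ∀ i, ℓ i t (covDeriv Γ γ 0 t) = 0)
    (hℓ2 : ∀ᶠ t in nhds t₀, ∀ i, ℓ i t (covDeriv Γ γ 1 t) = 0)
    (hdep : ¬ LinearIndependent ℝ
      ![covDeriv Γ γ 0 t₀, covDeriv Γ γ 1 t₀, covDeriv Γ γ 2 t₀]) :
    ∀ i, deriv (fun t => ℓ i t (covDeriv Γ γ 2 t)) t₀ =
      ℓ i t₀ (covDeriv Γ γ 3 t₀) :=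
  characteristic_function_derivative_covariant_general m Γ Ω hΓ I hI γ hγ hγΩ t₀ ht₀ hind ℓ hℓ hℓ1
    hℓ2 hdep
end
end

section
/- On ℝ³ with coordinates (x₁, x₂, x₃), define Christoffel symbols by Γ³₁₂ = Γ³₂₁ = x₁ + x₂² and Γ^λ_{μν} = 0 for all other index triples (a torsion-free connection), and let γ : ℝ → ℝ³ be γ(t) = (−t², t, 0). Then: (i) (∇γ)(t) = (−2t, 1, 0), (∇²γ)(t) = (−2, 0, 0), and (∇³γ)(t) = (0, 0, 0) for all t, so γ is torsionless ((∇γ)(t), (∇²γ)(t) are linearly independent and (∇γ)(t), (∇²γ)(t), (∇³γ)(t) are linearly dependent for every t); (ii) for every t₀ ∈ ℝ, the curve c(s) = (−2t₀ s − t₀², s + t₀, (1/3) t₀ s⁴) is a geodesic of this connection (it satisfies (c^λ)''(s) + Σ Γ^λ_{μν}(c(s)) (c^μ)'(s) (c^ν)'(s) = 0) with c(0) = γ(t₀) and c'(0) = γ'(t₀). -/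
/-!
Along `γ(t) = (−t², t, 0)` we have `x₁ + x₂² = 0`, so every Christoffel symbol vanishes on `γ`
and its covariant derivatives are its ordinary derivatives `(−2t, 1, 0)`, `(−2, 0, 0)`, `0`.
For the curve `c`, `x₁ + x₂² = s²` along `c`, so the only nontrivial geodesic equation reads
`(c³)'' + 2 s² (c¹)' (c²)' = 4 t₀ s² + 2 s² (−2 t₀) = 0`.
-/

open Set

noncomputable section

/-- The Christoffel symbols on `ℝ³` with `Γ³₁₂ = Γ³₂₁ = x₁ + x₂²` and all other
components zero (a torsion-free connection). -/
def ΓEx : (Fin 3 → ℝ) → Fin 3 → Fin 3 → Fin 3 → ℝ :=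
  fun x l μ ν =>
    if l = 2 ∧ ((μ = 0 ∧ ν = 1) ∨ (μ = 1 ∧ ν = 0)) then x 0 + (x 1) ^ 2 else 0

/-- The curve `γ(t) = (−t², t, 0)` in `ℝ³`. -/
def γEx : ℝ → Fin 3 → ℝ := fun t => ![-t ^ 2, t, 0]

def IsGeodesic {m : ℕ} (Γ : (Fin m → ℝ) → Fin m → Fin m → Fin m → ℝ) (c : ℝ → Fin m → ℝ) :
    Prop :=
  ∀ (s : ℝ) (l : Fin m), deriv (deriv fun u => c u l) s +
    ∑ μ, ∑ ν, Γ (c s) l μ ν * deriv (fun u => c u μ) s * deriv (fun u => c u ν) s = 0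

theorem covDeriv_succ_apply_of_christoffel_eq_zero {m : ℕ}
    {Γ : (Fin m → ℝ) → Fin m → Fin m → Fin m → ℝ} {γ : ℝ → Fin m → ℝ} {t : ℝ}
    (hΓ : Γ (γ t) = 0) (k : ℕ) (l : Fin m) : covDeriv Γ γ (k + 1) t l = deriv (fun u => covDeriv Γ γ k u l) t := by
  simp [covDeriv, hΓ]

theorem ΓEx_comm (x : Fin 3 → ℝ) (l μ ν : Fin 3) : ΓEx x l μ ν = ΓEx x l ν μ := by
  simp only [ΓEx, or_comm, and_comm]

theorem ΓEx_eq_zero {x : Fin 3 → ℝ} (hx : x 0 + x 1 ^ 2 = 0) : ΓEx x = 0 := by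
  ext l μ ν
  simp [ΓEx, hx]

theorem sum_sum_ΓEx_mul_mul (x v : Fin 3 → ℝ) (l : Fin 3) :
    ∑ μ, ∑ ν, ΓEx x l μ ν * v μ * v ν =
      if l = 2 then 2 * (x 0 + x 1 ^ 2) * v 0 * v 1 else 0 := by
  fin_cases l
  · simp [ΓEx]
  · simp [ΓEx]
  · simp only [ΓEx, Fin.reduceFinMk, Fin.isValue, true_and, ite_mul, zero_mul, Fin.sum_univ_three,
      zero_ne_one, one_ne_zero, and_false, and_true, false_or, or_false, Fin.reduceEq, or_self,
      ↓reduceIte, add_zero, zero_add]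
    ring

theorem ΓEx_γEx (t : ℝ) : ΓEx (γEx t) = 0 :=
  ΓEx_eq_zero (by simp [γEx])

theorem hasDerivAt_γEx (t : ℝ) : HasDerivAt γEx ![-2 * t, 1, 0] t := by
  rw [hasDerivAt_pi]
  intro i
  fin_cases i
  · exact (hasDerivAt_pow 2 t).neg.congr_deriv (by simp)
  · exact hasDerivAt_id t
  · exact hasDerivAt_const t 0

theorem covDeriv_zero_γEx (t : ℝ) : covDeriv ΓEx γEx 0 t = ![-2 * t, 1, 0] :=
  (hasDerivAt_γEx t).deriv

theorem covDeriv_one_γEx (t : ℝ) : covDeriv ΓEx γEx 1 t = ![-2, 0, 0] := by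
  ext l
  rw [covDeriv_succ_apply_of_christoffel_eq_zero (ΓEx_γEx t)]
  simp_rw [covDeriv_zero_γEx]
  fin_cases l <;> simp [mul_comm (-2 : ℝ)]

theorem covDeriv_two_γEx (t : ℝ) : covDeriv ΓEx γEx 2 t = 0 := by
  ext l
  rw [covDeriv_succ_apply_of_christoffel_eq_zero (ΓEx_γEx t)]
  simp_rw [covDeriv_one_γEx]
  simp

def geodesicEx (t₀ : ℝ) : ℝ → Fin 3 → ℝ :=
  fun s => ![-2 * t₀ * s - t₀ ^ 2, s + t₀, (1 / 3 : ℝ) * t₀ * s ^ 4]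

theorem geodesicEx_zero (t₀ : ℝ) : geodesicEx t₀ 0 = γEx t₀ := by
  ext i
  fin_cases i <;> simp [geodesicEx, γEx]

theorem hasDerivAt_geodesicEx_apply (t₀ s : ℝ) (l : Fin 3) :
    HasDerivAt (fun u => geodesicEx t₀ u l) (![-2 * t₀, 1, 4 / 3 * t₀ * s ^ 3] l) s := by
  fin_cases l
  · show HasDerivAt (fun u => -2 * t₀ * u - t₀ ^ 2) (-2 * t₀) s
    simpa using ((hasDerivAt_id s).const_mul (-2 * t₀)).sub_const (t₀ ^ 2)
  · show HasDerivAt (fun u => u + t₀) 1 s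
    simpa using (hasDerivAt_id s).add_const t₀
  · exact ((hasDerivAt_pow 4 s).const_mul (1 / 3 * t₀)).congr_deriv (by norm_num; ring)

theorem deriv_geodesicEx_apply (t₀ : ℝ) (l : Fin 3) :
    deriv (fun u => geodesicEx t₀ u l) = fun s => ![-2 * t₀, 1, 4 / 3 * t₀ * s ^ 3] l :=
  funext fun s => (hasDerivAt_geodesicEx_apply t₀ s l).deriv

theorem deriv_geodesicEx (t₀ s : ℝ) :
    deriv (geodesicEx t₀) s = ![-2 * t₀, 1, 4 / 3 * t₀ * s ^ 3] :=
  (hasDerivAt_pi.2 (hasDerivAt_geodesicEx_apply t₀ s)).deriv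

theorem deriv_deriv_geodesicEx_apply (t₀ s : ℝ) (l : Fin 3) :
    deriv (deriv fun u => geodesicEx t₀ u l) s = ![0, 0, 4 * t₀ * s ^ 2] l := by
  rw [deriv_geodesicEx_apply]
  fin_cases l
  · simp
  · simp
  · show deriv (fun s => 4 / 3 * t₀ * s ^ 3) s = 4 * t₀ * s ^ 2
    rw [((hasDerivAt_pow 3 s).const_mul (4 / 3 * t₀)).deriv]
    push_cast; ring

theorem isGeodesic_geodesicEx (t₀ : ℝ) : IsGeodesic ΓEx (geodesicEx t₀) := by
  intro s l
  have hx : geodesicEx t₀ s 0 + geodesicEx t₀ s 1 ^ 2 = s ^ 2 := by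
    simp only [geodesicEx, Matrix.cons_val_zero, Matrix.cons_val_one]
    ring
  simp_rw [deriv_deriv_geodesicEx_apply, deriv_geodesicEx_apply,
    sum_sum_ΓEx_mul_mul (geodesicEx t₀ s) (![-2 * t₀, 1, 4 / 3 * t₀ * s ^ 3]), hx]
  fin_cases l
  · simp
  · simp
  · simp only [Fin.reduceFinMk, Fin.isValue, ↓reduceIte, Matrix.cons_val, Matrix.cons_val_zero,
      Matrix.cons_val_one]
    ring

theorem linearIndependent_velocity_acceleration_γEx (t : ℝ) :
    LinearIndependent ℝ ![(![-2 * t, 1, 0] : Fin 3 → ℝ), ![-2, 0, 0]] := by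
  rw [LinearIndependent.pair_iff]
  intro a b h
  have h₀ := congrFun h 0
  have h₁ := congrFun h 1
  simp only [Pi.add_apply, Pi.smul_apply, Matrix.cons_val_zero, Matrix.cons_val_one,
    smul_eq_mul, Pi.zero_apply] at h₀ h₁
  have ha : a = 0 := by linarith
  exact ⟨ha, by subst ha; linarith⟩

/-- For the connection `ΓEx` and the curve `γEx`:
(i) `∇γ(t) = (−2t, 1, 0)`, `∇²γ(t) = (−2, 0, 0)`, `∇³γ(t) = 0`, so `γEx` is
torsionless; (ii) for every `t₀`, `c(s) = (−2t₀s − t₀², s + t₀, (1/3)t₀s⁴)` is a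
geodesic of this connection with `c(0) = γ(t₀)` and `c'(0) = γ'(t₀)`. -/
theorem example_torsionless_curve_and_geodesics :
    (∀ x l μ ν, ΓEx x l μ ν = ΓEx x l ν μ) ∧
    (∀ t : ℝ, covDeriv ΓEx γEx 0 t = ![-2 * t, 1, 0]) ∧
    (∀ t : ℝ, covDeriv ΓEx γEx 1 t = ![-2, 0, 0]) ∧
    (∀ t : ℝ, covDeriv ΓEx γEx 2 t = 0) ∧
    (∀ t : ℝ,
      LinearIndependent ℝ ![covDeriv ΓEx γEx 0 t, covDeriv ΓEx γEx 1 t] ∧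
      ¬ LinearIndependent ℝ
        ![covDeriv ΓEx γEx 0 t, covDeriv ΓEx γEx 1 t, covDeriv ΓEx γEx 2 t]) ∧
    (∀ t₀ : ℝ,
      (fun s : ℝ => (![-2 * t₀ * s - t₀ ^ 2, s + t₀, (1 / 3 : ℝ) * t₀ * s ^ 4] :
          Fin 3 → ℝ)) 0 = γEx t₀ ∧
      deriv (fun s : ℝ =>
          (![-2 * t₀ * s - t₀ ^ 2, s + t₀, (1 / 3 : ℝ) * t₀ * s ^ 4] :
            Fin 3 → ℝ)) 0 = deriv γEx t₀ ∧
      ∀ (s : ℝ) (l : Fin 3),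
        deriv (deriv (fun u : ℝ =>
            (![-2 * t₀ * u - t₀ ^ 2, u + t₀, (1 / 3 : ℝ) * t₀ * u ^ 4] :
              Fin 3 → ℝ) l)) s +
          ∑ μ, ∑ ν,
            ΓEx (![-2 * t₀ * s - t₀ ^ 2, s + t₀, (1 / 3 : ℝ) * t₀ * s ^ 4]) l μ ν *
            deriv (fun u : ℝ =>
              (![-2 * t₀ * u - t₀ ^ 2, u + t₀, (1 / 3 : ℝ) * t₀ * u ^ 4] :
                Fin 3 → ℝ) μ) s *
            deriv (fun u : ℝ =>
              (![-2 * t₀ * u - t₀ ^ 2, u + t₀, (1 / 3 : ℝ) * t₀ * u ^ 4] :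
                Fin 3 → ℝ) ν) s = 0) := by
  refine ⟨ΓEx_comm, covDeriv_zero_γEx, covDeriv_one_γEx, covDeriv_two_γEx, fun t => ?_,
    fun t₀ => ⟨geodesicEx_zero t₀, ?_, isGeodesic_geodesicEx t₀⟩⟩
  · rw [covDeriv_zero_γEx, covDeriv_one_γEx, covDeriv_two_γEx]
    exact ⟨linearIndependent_velocity_acceleration_γEx t, fun h => h.ne_zero 2 rfl⟩
  · refine (deriv_geodesicEx t₀ 0).trans ?_
    rw [(hasDerivAt_γEx t₀).deriv]
    simp
end
end

section
/- The smooth map f : ℝ² → ℝ³ defined by f(t,s) = (−2ts − t², s + t, (1/3) t s⁴) is, for every t₀ ∈ ℝ, diffeomorphic as a germ at (t₀, 0) to the (2,5)-cuspidal edge g(u,w) = (u, w², w⁵); in particular this holds at the origin (0,0). -/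
open Set

noncomputable section

/-- The map `f(t,s) = (−2ts − t², s + t, (1/3) t s⁴) : ℝ² → ℝ³` is, for
every `t₀ ∈ ℝ`, diffeomorphic as a germ at `(t₀, 0)` to the `(2,5)`-cuspidal edge
`g(u,w) = (u, w², w⁵)`; in particular this holds at the origin. -/
theorem example_two_five_cuspidal_edge :
    ∀ t₀ : ℝ,
      GermDiffeomorphic
        (fun p : ℝ × ℝ =>
          ![-2 * p.1 * p.2 - p.1 ^ 2, p.2 + p.1, (1 / 3 : ℝ) * p.1 * p.2 ^ 4])
        (t₀, (0 : ℝ))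
        (fun p : ℝ × ℝ => ![p.1, p.2 ^ 2, p.2 ^ 5])
        ((0 : ℝ), (0 : ℝ)) := by
  intro t₀
  refine ⟨univ, univ,
    (fun p : ℝ × ℝ => (p.2 + p.1 - t₀, p.2)),
    (fun v : Fin 3 → ℝ => ![v 1 - t₀, v 0 + v 1 ^ 2, v 1 * (v 0 + v 1 ^ 2) ^ 2 - 3 * v 2]),
    ?_, ?_, trivial, trivial, ?_, ?_, fun x _ => trivial, ?_⟩
  · refine ⟨isOpen_univ, ?_, ?_, ⟨fun p : ℝ × ℝ => (p.1 - p.2 + t₀, p.2), ?_, ?_⟩⟩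
    · rw [image_univ, Set.range_eq_univ.mpr]
      · exact isOpen_univ
      · intro v
        exact ⟨(v.1 - v.2 + t₀, v.2), by simp; ring⟩
    · exact (ContDiff.contDiffOn (by fun_prop))
    · exact (ContDiff.contDiffOn (by fun_prop))
    · intro x _; simp [Prod.ext_iff]; ring
  · have hcd : ∀ (F : (Fin 3 → ℝ) → ℝ), ContDiff ℝ (⊤ : ℕ∞) F → True := fun _ _ => trivial
    refine ⟨isOpen_univ, ?_, ?_, ⟨fun v : Fin 3 → ℝ =>
      ![v 1 - (v 0 + t₀) ^ 2, v 0 + t₀, (1 / 3 : ℝ) * ((v 0 + t₀) * v 1 ^ 2 - v 2)], ?_, ?_⟩⟩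
    · rw [image_univ, Set.range_eq_univ.mpr]
      · exact isOpen_univ
      · intro v
        refine ⟨![v 1 - (v 0 + t₀) ^ 2, v 0 + t₀, (1 / 3 : ℝ) * ((v 0 + t₀) * v 1 ^ 2 - v 2)], ?_⟩
        funext i
        fin_cases i <;> simp <;> ring
    · refine ContDiff.contDiffOn ?_
      apply contDiff_pi.mpr
      intro i
      fin_cases i <;> simp <;> fun_prop
    · refine ContDiff.contDiffOn ?_
      apply contDiff_pi.mpr
      intro i
      fin_cases i <;> simp <;> fun_prop
    · intro v _
      funext i
      fin_cases i <;> simp <;> ring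
  · simp
  · funext i
    fin_cases i <;> simp <;> ring
  · intro x _
    funext i
    fin_cases i <;> simp <;> ring
end
end
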